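/- Let ψ_w(x) ∈ ℝ^D be the random Fourier feature map ψ(x) = √(2/D)·(sin(w₁ᵀx), cos(w₁ᵀx), …, sin(w_{D/2}ᵀx), cos(w_{D/2}ᵀx)) with w_i drawn i.i.d. from the Fourier transform density k* of a normalized shift-invariant positive definite kernel k (k(0) = 1). Then for any x, y ∈ ℝ^d, the mean squared error satisfies E_w[(ψ(x)ᵀψ(y) − k(x − y))²] = (1/D)·(1 + k(2(x − y)) − 2·k(x − y)²). -/

import Mathlib

open MeasureTheory

/-- The random Fourier feature map with `M` frequencies (`D = 2M` feature dimensions):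
`ψ(x) = √(2/D)·(sin(w₁ᵀx), cos(w₁ᵀx), …, sin(w_Mᵀx), cos(w_Mᵀx))`. -/
noncomputable def rff {d : ℕ} (M : ℕ) (w : Fin M → EuclideanSpace ℝ (Fin d))
    (x : EuclideanSpace ℝ (Fin d)) : Fin M × Bool → ℝ :=
  fun p => Real.sqrt (2 / (2 * M)) *
    (if p.2 then Real.cos (inner ℝ (w p.1) x : ℝ) else Real.sin (inner ℝ (w p.1) x : ℝ))

/-!
By the addition formula for the cosine, `ψ(x)ᵀψ(y)` is the empirical mean of the `M` variables
`cos ⟪w_i, x - y⟫`, each with mean `k (x - y)` by Bochner's representation of `k`. The mean squared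
error is therefore the variance of this empirical mean, i.e. `1/M` times the variance of one term
(the terms are independent), and `cos² = (1 + cos 2·)/2` expresses that variance through
`k (2 (x - y))` and `k (x - y)`.
-/

open ProbabilityTheory Real Finset

lemma sum_rff_mul_rff {d : ℕ} (M : ℕ) (w : Fin M → EuclideanSpace ℝ (Fin d))
    (x y : EuclideanSpace ℝ (Fin d)) :
    ∑ p, rff M w x p * rff M w y p = (M : ℝ)⁻¹ * ∑ i, cos (inner ℝ (w i) (x - y)) := by
  have hsqrt : √(2 / (2 * M)) * √(2 / (2 * M)) = (M : ℝ)⁻¹ := by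
    rw [Real.mul_self_sqrt (by positivity)]
    field_simp
  simp only [Fintype.sum_prod_type, Fintype.sum_bool, rff, if_true, Bool.false_eq_true, if_false,
    inner_sub_right, cos_sub, mul_sum]
  refine sum_congr rfl fun i _ => ?_
  rw [← hsqrt]
  ring

section Variance

variable {Ω : Type*} [MeasurableSpace Ω] {P : Measure Ω}

lemma variance_mean_eq_div_card {ι : Type*} [Fintype ι] {X : ι → Ω → ℝ}
    (hX : ∀ i, MemLp (X i) 2 P) (hindep : Pairwise fun i j => X i ⟂ᵢ[P] X j) {v : ℝ}
    (hv : ∀ i, Var[X i; P] = v) :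
    Var[fun ω => (Fintype.card ι : ℝ)⁻¹ * ∑ i, X i ω; P] = v / Fintype.card ι := by
  have hsum : Var[fun ω => ∑ i, X i ω; P] = Fintype.card ι * v := by
    simp_rw [← Finset.sum_apply]
    rw [IndepFun.variance_sum (fun i _ => hX i) fun i _ j _ hij => hindep hij]
    simp [hv]
  rw [variance_const_mul, hsum]
  rcases eq_or_ne (Fintype.card ι : ℝ) 0 with h | h
  · simp [h]
  · field_simp

lemma variance_cos [IsProbabilityMeasure P] {f : Ω → ℝ} (hf : AEStronglyMeasurable f P) :
    Var[fun ω => cos (f ω); P] =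
      (1 + ∫ ω, cos (2 * f ω) ∂P) / 2 - (∫ ω, cos (f ω) ∂P) ^ 2 := by
  have hbdd : ∀ c : ℝ, MemLp (fun ω => cos (c * f ω)) 2 P := fun c =>
    MemLp.of_bound (continuous_cos.comp_aestronglyMeasurable (hf.const_mul c)) 1
      (.of_forall fun ω => by simpa using abs_cos_le_one _)
  have hcos : MemLp (fun ω => cos (f ω)) 2 P := by simpa using hbdd 1
  rw [variance_eq_sub hcos]
  simp only [Pi.pow_apply, cos_sq, add_div]
  rw [integral_add (integrable_const _) (((hbdd 2).integrable one_le_two).div_const 2),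
    integral_const, integral_div]
  simp

end Variance

theorem stmt_12_general {Ω : Type*} [MeasurableSpace Ω] (P : Measure Ω) [IsProbabilityMeasure P]
    (d M : ℕ) (hM : 0 < M)
    (w : Fin M → Ω → EuclideanSpace ℝ (Fin d)) (hw : ∀ i, Measurable (w i))
    (hindep : ProbabilityTheory.iIndepFun w P)
    (μ : Measure (EuclideanSpace ℝ (Fin d))) [IsProbabilityMeasure μ]
    (hdist : ∀ i, Measure.map (w i) P = μ)
    (k : EuclideanSpace ℝ (Fin d) → ℝ)
    (hk : ∀ δ, k δ = ∫ v, Real.cos (inner ℝ v δ : ℝ) ∂μ)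
    (x y : EuclideanSpace ℝ (Fin d)) :
    (∫ ω, ((∑ p : Fin M × Bool,
        rff M (fun i => w i ω) x p * rff M (fun i => w i ω) y p) - k (x - y)) ^ 2 ∂P) =
      (1 / (2 * M)) * (1 + k ((2 : ℝ) • (x - y)) - 2 * (k (x - y)) ^ 2) := by
  simp_rw [sum_rff_mul_rff]
  set δ := x - y
  have hM' : (M : ℝ) ≠ 0 := by positivity
  have hcos_inner_meas : ∀ z : EuclideanSpace ℝ (Fin d), Measurable fun v => cos (inner ℝ v z) := by
    fun_prop
  have hX : ∀ i, MemLp (fun ω => cos (inner ℝ (w i ω) δ)) 2 P := fun i =>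
    MemLp.of_bound ((hcos_inner_meas δ).comp (hw i)).aestronglyMeasurable 1
      (.of_forall fun ω => by simpa using abs_cos_le_one _)
  have hmean : ∀ i z, ∫ ω, cos (inner ℝ (w i ω) z) ∂P = k z := fun i z => by
    rw [hk, ← hdist i, integral_map (hw i).aemeasurable (hcos_inner_meas z).aestronglyMeasurable]
  have hvar : ∀ i, Var[fun ω => cos (inner ℝ (w i ω) δ); P] =
      (1 + k ((2 : ℝ) • δ)) / 2 - k δ ^ 2 := fun i => by
    rw [variance_cos ((hw i).inner measurable_const).aestronglyMeasurable, ← hmean i, ← hmean i]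
    simp only [inner_smul_right]
  have hindep' : Pairwise fun i j =>
      (fun ω => cos (inner ℝ (w i ω) δ)) ⟂ᵢ[P] fun ω => cos (inner ℝ (w j ω) δ) :=
    fun i j hij => (hindep.indepFun hij).comp (hcos_inner_meas δ) (hcos_inner_meas δ)
  have hmean_avg : ∫ ω, (M : ℝ)⁻¹ * ∑ i, cos (inner ℝ (w i ω) δ) ∂P = k δ := by
    rw [integral_const_mul, integral_finsetSum _ fun i _ => (hX i).integrable one_le_two]
    simp [hmean, hM']
  calc ∫ ω, ((M : ℝ)⁻¹ * ∑ i, cos (inner ℝ (w i ω) δ) - k δ) ^ 2 ∂P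
      = Var[fun ω => (M : ℝ)⁻¹ * ∑ i, cos (inner ℝ (w i ω) δ); P] := by
        rw [variance_eq_integral (by fun_prop), hmean_avg]
    _ = ((1 + k ((2 : ℝ) • δ)) / 2 - k δ ^ 2) / M := by
        simpa using variance_mean_eq_div_card hX hindep' hvar
    _ = 1 / (2 * M) * (1 + k ((2 : ℝ) • δ) - 2 * k δ ^ 2) := by
        field_simp

theorem stmt_12 {Ω : Type*} [MeasurableSpace Ω] (P : Measure Ω) [IsProbabilityMeasure P]
    (d M : ℕ) (hM : 0 < M)
    (w : Fin M → Ω → EuclideanSpace ℝ (Fin d)) (hw : ∀ i, Measurable (w i))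
    (hindep : ProbabilityTheory.iIndepFun w P)
    (μ : Measure (EuclideanSpace ℝ (Fin d))) [IsProbabilityMeasure μ]
    (hdist : ∀ i, Measure.map (w i) P = μ)
    (k : EuclideanSpace ℝ (Fin d) → ℝ)
    (hk : ∀ δ, k δ = ∫ v, Real.cos (inner ℝ v δ : ℝ) ∂μ)
    (hk0 : k 0 = 1)
    (x y : EuclideanSpace ℝ (Fin d)) :
    (∫ ω, ((∑ p : Fin M × Bool,
        rff M (fun i => w i ω) x p * rff M (fun i => w i ω) y p) - k (x - y)) ^ 2 ∂P) =
      (1 / (2 * M)) * (1 + k ((2 : ℝ) • (x - y)) - 2 * (k (x - y)) ^ 2) :=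
  stmt_12_general P d M hM w hw hindep μ hdist k hk x y
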